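/- arXiv:0909.1425 — 2 statements merged into one kernel-verified Lean document; each statement's English description precedes it below -/
import Mathlib

section
/- Let (Ω, F, P) be a probability space, and let C, D, E be sub-σ-algebras with E ⊆ C and E ⊆ D. Suppose that for every f ∈ L²(C) with E[f | E] = 0 and every g ∈ L²(D) with E[g | E] = 0, one has E[fg] = 0 (relative orthogonality over E). Then for every f ∈ L²(P), E[E[f | C] | D] = E[f | E]. -/
/-!
Write `E[f | C] = h + E[f | E]` with `h := E[f | C] - E[f | E]`, so that `h` is `C`-measurable
and `E[h | E] = 0`. Then `g := E[h | D]` is `D`-measurable with `E[g | E] = E[h | E] = 0`, and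
self-adjointness of `E[· | D]` gives `∫ g² = ∫ h g`, which vanishes by relative orthogonality.
Hence `E[h | D] = 0` and `E[E[f | C] | D] = E[E[f | E] | D] = E[f | E]`.
-/

open MeasureTheory

namespace MeasureTheory

variable {Ω : Type*} {m m' m0 : MeasurableSpace Ω} {μ : Measure Ω}

lemma ae_eq_zero_of_integral_mul_self_eq_zero {g : Ω → ℝ} (hg : MemLp g 2 μ)
    (h : ∫ ω, g ω * g ω ∂μ = 0) : g =ᵐ[μ] 0 := by
  have hsq := (integral_eq_zero_iff_of_nonneg (fun ω ↦ mul_self_nonneg (g ω))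
    (hg.integrable_mul hg)).mp h
  filter_upwards [hsq] with ω hω
  exact mul_self_eq_zero.mp hω

variable [IsFiniteMeasure μ]

lemma integral_mul_condExp_of_stronglyMeasurable (hm : m ≤ m0) {f g : Ω → ℝ}
    (hf : StronglyMeasurable[m] f) (hf2 : MemLp f 2 μ) (hg2 : MemLp g 2 μ) :
    ∫ ω, f ω * μ[g|m] ω ∂μ = ∫ ω, f ω * g ω ∂μ := by
  have hpull : μ[f * g|m] =ᵐ[μ] f * μ[g|m] :=
    condExp_mul_of_stronglyMeasurable_left hf (hf2.integrable_mul hg2) (hg2.integrable one_le_two)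
  calc ∫ ω, f ω * μ[g|m] ω ∂μ = ∫ ω, μ[f * g|m] ω ∂μ := (integral_congr_ae hpull).symm
    _ = ∫ ω, f ω * g ω ∂μ := integral_condExp hm

/-- By self-adjointness, `∫ g E[g | m] = ∫ E[g | m]²`. -/
lemma condExp_ae_eq_zero_of_integral_mul_condExp_eq_zero (hm : m ≤ m0) {g : Ω → ℝ}
    (hg : MemLp g 2 μ) (h : ∫ ω, g ω * μ[g|m] ω ∂μ = 0) : μ[g|m] =ᵐ[μ] 0 := by
  refine ae_eq_zero_of_integral_mul_self_eq_zero (hg.condExp one_le_two) ?_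
  rw [integral_mul_condExp_of_stronglyMeasurable hm stronglyMeasurable_condExp
    (hg.condExp one_le_two) hg, ← h]
  simp_rw [mul_comm]

lemma condExp_condExp_sub_condExp_ae_eq_zero {F : Type*} [NormedAddCommGroup F]
    [NormedSpace ℝ F] [CompleteSpace F] (hm : m ≤ m') (hm' : m' ≤ m0) (f : Ω → F) :
    μ[μ[f|m'] - μ[f|m]|m] =ᵐ[μ] 0 := by
  have hidem : μ[μ[f|m]|m] = μ[f|m] :=
    condExp_of_stronglyMeasurable (hm.trans hm') stronglyMeasurable_condExp integrable_condExp
  filter_upwards [condExp_sub (m := m) (integrable_condExp (f := f) (m := m'))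
    (integrable_condExp (f := f) (m := m)), condExp_condExp_of_le (f := f) hm hm']
    with ω hsub htower
  simp [hsub, htower, hidem]

end MeasureTheory

/-- let `E ⊆ C` and `E ⊆ D` be sub-σ-algebras of a probability space such
that `L²(C) ⊖ L²(E)` and `L²(D) ⊖ L²(E)` are orthogonal. Then for every `f ∈ L²(P)`,
`E[E[f | C] | D] = E[f | E]`. -/
theorem stmt7 {Ω : Type*} {m0 : MeasurableSpace Ω} (P : Measure Ω) [IsProbabilityMeasure P]
    (C D E : MeasurableSpace Ω) (hC : C ≤ m0) (hD : D ≤ m0)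
    (hEC : E ≤ C) (hED : E ≤ D)
    (horth : ∀ f g : Ω → ℝ, MemLp f 2 P → MemLp g 2 P →
      StronglyMeasurable[C] f → StronglyMeasurable[D] g →
      P[f|E] =ᵐ[P] 0 → P[g|E] =ᵐ[P] 0 → ∫ ω, f ω * g ω ∂P = 0) :
    ∀ f : Ω → ℝ, MemLp f 2 P → P[P[f|C]|D] =ᵐ[P] P[f|E] := by
  intro f hf
  set h := P[f|C] - P[f|E]
  have hh : MemLp h 2 P := (hf.condExp one_le_two).sub (hf.condExp one_le_two)
  have hhE : P[h|E] =ᵐ[P] 0 := condExp_condExp_sub_condExp_ae_eq_zero hEC hC f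
  have hhD : P[h|D] =ᵐ[P] 0 :=
    condExp_ae_eq_zero_of_integral_mul_condExp_eq_zero hD hh <|
      horth h _ hh (hh.condExp one_le_two)
        (stronglyMeasurable_condExp.sub (stronglyMeasurable_condExp.mono hEC))
        stronglyMeasurable_condExp hhE ((condExp_condExp_of_le hED hD).trans hhE)
  calc P[P[f|C]|D] = P[h + P[f|E]|D] := by rw [sub_add_cancel]
    _ =ᵐ[P] P[h|D] + P[P[f|E]|D] := condExp_add (hh.integrable one_le_two) integrable_condExp D
    _ = P[h|D] + P[f|E] := by
      rw [condExp_of_stronglyMeasurable hD (stronglyMeasurable_condExp.mono hED) integrable_condExp]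
    _ =ᵐ[P] P[f|E] := by
      filter_upwards [hhD] with ω hω
      simp [hω]
end

section
/- Let μ be a σ-finite measure on (X,A) and N the Poisson point process with intensity μ. For simple functions f, g ∈ L²(μ) (finite linear combinations of indicators of finite-measure sets, with values > −1), the exponential vectors satisfy ⟨𝓔_f, 𝓔_g⟩_{L²(μ*)} = exp(⟨f, g⟩_{L²(μ)}), where 𝓔_f(ν) = exp(−∫ f dμ) · Π_{x : ν({x})=1} (1 + f(x)). -/
open MeasureTheory ProbabilityTheory Real
open scoped NNReal ENNReal Nat

/-! The integrand is the constant `exp (-∑ aᵢ λᵢ - ∑ bᵢ λᵢ)` times `∏ ((1 + aᵢ)(1 + bᵢ)) ^ Nᵢ`,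
where `λᵢ = μ (A i)`. By independence and the Poisson generating function
`E[z ^ N] = exp (λ (z - 1))`, the product integrates to `exp (∑ λᵢ (aᵢ + bᵢ + aᵢ bᵢ))`,
and the constant cancels the linear terms. -/

lemma integral_pow_poissonMeasure (r : ℝ≥0) (c : ℝ) :
    ∫ n, c ^ n ∂poissonMeasure r = exp (r * (c - 1)) := by
  rw [integral_poissonMeasure]
  calc ∑' n : ℕ, (exp (-r) * r ^ n / n !) • c ^ n
      = exp (-r) * ∑' n : ℕ, (r * c) ^ n / n ! := by
        rw [← tsum_mul_left]
        congr with n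
        rw [smul_eq_mul, mul_pow]
        ring
    _ = exp (r * (c - 1)) := by
        rw [(NormedSpace.expSeries_div_hasSum_exp (r * c : ℝ)).tsum_eq, ← exp_eq_exp_ℝ,
          ← exp_add]
        ring_nf

lemma integral_prod_pow_of_iIndepFun_poisson {Ω ι : Type*} [MeasurableSpace Ω] [Fintype ι]
    {P : Measure Ω} {N : ι → Ω → ℕ} {r : ι → ℝ≥0} (hN : ∀ i, Measurable (N i))
    (hlaw : ∀ i, P.map (N i) = poissonMeasure (r i)) (hindep : iIndepFun N P) (c : ι → ℝ) :
    ∫ ω, ∏ i, c i ^ N i ω ∂P = exp (∑ i, (r i : ℝ) * (c i - 1)) := by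
  rw [hindep.integral_fun_prod_comp (fun i ↦ (hN i).aemeasurable) fun _ ↦ .of_discrete,
    exp_sum]
  refine Finset.prod_congr rfl fun i _ ↦ ?_
  rw [← integral_pow_poissonMeasure, ← hlaw i,
    integral_map (hN i).aemeasurable .of_discrete]

theorem stmt10_general {X Ω : Type*} [MeasurableSpace X] [MeasurableSpace Ω]
    (μ : Measure X) (P : Measure Ω)
    (m : ℕ) (A : Fin m → Set X)
    (a b : Fin m → ℝ)
    (N : Fin m → Ω → ℕ) (hNmeas : ∀ i, Measurable (N i))
    (hNlaw : ∀ i, Measure.map (N i) P = poissonMeasure (μ (A i)).toNNReal)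
    (hNindep : iIndepFun N P) :
    ∫ ω, (exp (-∑ i, a i * (μ (A i)).toReal) * ∏ i, (1 + a i) ^ N i ω)
        * (exp (-∑ i, b i * (μ (A i)).toReal) * ∏ i, (1 + b i) ^ N i ω) ∂P
      = exp (∑ i, a i * b i * (μ (A i)).toReal) := by
  have hintegrand : ∀ ω, (exp (-∑ i, a i * (μ (A i)).toReal) * ∏ i, (1 + a i) ^ N i ω)
        * (exp (-∑ i, b i * (μ (A i)).toReal) * ∏ i, (1 + b i) ^ N i ω)
      = exp (-∑ i, a i * (μ (A i)).toReal) * exp (-∑ i, b i * (μ (A i)).toReal)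
        * ∏ i, ((1 + a i) * (1 + b i)) ^ N i ω := fun ω ↦ by
    simp only [mul_pow, Finset.prod_mul_distrib]
    ring
  simp_rw [hintegrand]
  rw [integral_const_mul, integral_prod_pow_of_iIndepFun_poisson hNmeas hNlaw hNindep,
    ← exp_add, ← exp_add]
  congr 1
  simp only [← Finset.sum_neg_distrib, ← Finset.sum_add_distrib]
  refine Finset.sum_congr rfl fun i _ ↦ ?_
  rw [ENNReal.coe_toNNReal_eq_toReal]
  ring

/-- inner product of exponential vectors over a Poisson point process.
For simple functions `f = Σᵢ aᵢ 1_{Aᵢ}` and `g = Σᵢ bᵢ 1_{Aᵢ}` (with `Aᵢ` pairwise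
disjoint of finite measure and values `> −1`), the exponential vectors
`𝓔_f(ν) = exp(−∫ f dμ) Π_{x ∈ ν} (1 + f(x))`, here evaluated via the Poisson counts
`N_{Aᵢ}` as `𝓔_f = exp(−Σᵢ aᵢ μ(Aᵢ)) Πᵢ (1+aᵢ)^{N_{Aᵢ}}`, satisfy
`⟨𝓔_f, 𝓔_g⟩_{L²(μ*)} = exp(⟨f, g⟩_{L²(μ)}) = exp(Σᵢ aᵢ bᵢ μ(Aᵢ))`. -/
theorem stmt10 {X Ω : Type*} [MeasurableSpace X] [MeasurableSpace Ω]
    (μ : Measure X) [SigmaFinite μ] (P : Measure Ω) [IsProbabilityMeasure P]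
    (m : ℕ) (A : Fin m → Set X)
    (hAmeas : ∀ i, MeasurableSet (A i)) (hAfin : ∀ i, μ (A i) < ⊤)
    (hAdisj : Pairwise (Function.onFun Disjoint A))
    (a b : Fin m → ℝ) (ha : ∀ i, -1 < a i) (hb : ∀ i, -1 < b i)
    (N : Fin m → Ω → ℕ) (hNmeas : ∀ i, Measurable (N i))
    (hNlaw : ∀ i, Measure.map (N i) P = poissonMeasure (μ (A i)).toNNReal)
    (hNindep : iIndepFun N P) :
    ∫ ω, (exp (-∑ i, a i * (μ (A i)).toReal) * ∏ i, (1 + a i) ^ N i ω)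
        * (exp (-∑ i, b i * (μ (A i)).toReal) * ∏ i, (1 + b i) ^ N i ω) ∂P
      = exp (∑ i, a i * b i * (μ (A i)).toReal) :=
  stmt10_general μ P m A a b N hNmeas hNlaw hNindep
end
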